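/- arXiv:2010.09301 — 7 statements merged into one kernel-verified Lean document; each statement's English description precedes it below -/
import Mathlib

section
/- Let Y be a real random variable distributed according to the Gaussian measure N(0, s) with s > 0, and let σ > 0 and μ > 0. Then E[exp(−2π²σ²Y²) · cos(2πμY)] = (1 + 4π²σ²s)^{−1/2} · exp(−2π²μ²s / (1 + 4π²σ²s)). -/
open MeasureTheory ProbabilityTheory Real
open scoped NNReal ENNReal

lemma integral_exp_neg_mul_sq_cos {c b : ℝ} (hc : 0 < c) :
    ∫ x : ℝ, Real.exp (-c * x ^ 2) * Real.cos (b * x)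
      = (π / c) ^ ((1 : ℝ) / 2) * Real.exp (-(b ^ 2) / (4 * c)) := by
  have hre : 0 < (c : ℂ).re := by simpa using hc
  have hint := integrable_cexp_quadratic hre (b * Complex.I) 0
  have hpt : ∀ x : ℝ, Real.exp (-c * x ^ 2) * Real.cos (b * x)
      = (Complex.exp (-(c : ℂ) * (x : ℂ) ^ 2 + (b * Complex.I) * x + 0)).re := by
    intro x
    have hz : (-(c : ℂ) * (x : ℂ) ^ 2 + (↑b * Complex.I) * ↑x + 0)
        = ((-c * x ^ 2 : ℝ) : ℂ) + ((b * x : ℝ) : ℂ) * Complex.I := by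
      push_cast; ring
    rw [hz, Complex.exp_re]
    simp [← Complex.ofReal_pow]
  have h := integral_cexp_quadratic (b := -(c : ℂ)) (by simpa using hc) (b * Complex.I) 0
  calc ∫ x : ℝ, Real.exp (-c * x ^ 2) * Real.cos (b * x)
      = ∫ x : ℝ, (Complex.exp (-(c : ℂ) * (x : ℂ) ^ 2 + (b * Complex.I) * x + 0)).re := by
        simp_rw [hpt]
    _ = (∫ x : ℝ, Complex.exp (-(c : ℂ) * (x : ℂ) ^ 2 + (b * Complex.I) * x + 0)).re :=
        integral_re hint
    _ = (π / c) ^ ((1 : ℝ) / 2) * Real.exp (-(b ^ 2) / (4 * c)) := by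
        rw [h]
        have h1 : ((0 : ℂ) - ((b : ℂ) * Complex.I) ^ 2 / (4 * -(c : ℂ)))
            = ((-(b ^ 2) / (4 * c) : ℝ) : ℂ) := by
          push_cast
          rw [mul_pow, Complex.I_sq]
          ring
        have h2 : ((π : ℂ) / - -(c : ℂ)) = ((π / c : ℝ) : ℂ) := by push_cast; ring
        rw [h1, h2, show ((1 : ℂ)/2) = (((1 : ℝ)/2 : ℝ) : ℂ) by norm_num,
          ← Complex.ofReal_cpow (by positivity), ← Complex.ofReal_exp,
          ← Complex.ofReal_mul, Complex.ofReal_re]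

/-- Expectation of the one-dimensional spectral mixture kernel under a centered Gaussian
of variance `s`: `E[exp(−2π²σ²Y²)·cos(2πμY)] = (1 + 4π²σ²s)^{−1/2} · exp(−2π²μ²s/(1 + 4π²σ²s))`. -/
theorem sm_kernel_gaussian_expectation
    {Ω : Type*} [MeasurableSpace Ω] (P : Measure Ω) [IsProbabilityMeasure P]
    (s : ℝ≥0) (hs : 0 < s)
    (Y : Ω → ℝ) (hmeas : Measurable Y)
    (hlaw : Measure.map Y P = gaussianReal 0 s)
    (σ μ : ℝ) (hσ : 0 < σ) (hμ : 0 < μ) :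
    ∫ ω, Real.exp (-2 * π ^ 2 * σ ^ 2 * (Y ω) ^ 2) * Real.cos (2 * π * μ * Y ω) ∂P
      = (1 + 4 * π ^ 2 * σ ^ 2 * (s : ℝ)) ^ (-(1 : ℝ) / 2)
        * Real.exp (-2 * π ^ 2 * μ ^ 2 * (s : ℝ) / (1 + 4 * π ^ 2 * σ ^ 2 * (s : ℝ))) := by
  have hs' : (0 : ℝ) < (s : ℝ) := hs
  set g : ℝ → ℝ := fun x => Real.exp (-2 * π ^ 2 * σ ^ 2 * x ^ 2) * Real.cos (2 * π * μ * x)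
    with hg
  have hgm : Measurable g := by
    apply Measurable.mul
    · exact (measurable_const.mul (measurable_id.pow_const 2)).exp
    · exact (measurable_const.mul measurable_id).cos
  have step1 : ∫ ω, g (Y ω) ∂P = ∫ x, g x ∂(gaussianReal 0 s) := by
    rw [← hlaw, integral_map hmeas.aemeasurable hgm.aestronglyMeasurable]
  have hpdfm : Measurable fun x => (gaussianPDFReal 0 s x).toNNReal :=
    (measurable_gaussianPDFReal 0 s).real_toNNReal
  have step2 : ∫ x, g x ∂(gaussianReal 0 s) = ∫ x, gaussianPDFReal 0 s x * g x := by
    rw [gaussianReal_of_var_ne_zero 0 hs.ne']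
    rw [show gaussianPDF 0 s = fun x => ((gaussianPDFReal 0 s x).toNNReal : ℝ≥0∞) from rfl]
    rw [integral_withDensity_eq_integral_smul hpdfm]
    congr 1
    ext x
    rw [NNReal.smul_def, smul_eq_mul, Real.coe_toNNReal _ (gaussianPDFReal_nonneg 0 s x)]
  set c : ℝ := 2 * π ^ 2 * σ ^ 2 + 1 / (2 * s) with hc
  have hcpos : 0 < c := by positivity
  have step3 : ∫ x, gaussianPDFReal 0 s x * g x
      = (Real.sqrt (2 * π * s))⁻¹ * ∫ x, Real.exp (-c * x ^ 2) * Real.cos (2 * π * μ * x) := by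
    rw [← integral_const_mul]
    congr 1
    ext x
    rw [gaussianPDFReal, hg]
    simp only [sub_zero, one_div]
    rw [mul_assoc, ← mul_assoc (Real.exp _), ← Real.exp_add]
    congr 2
    rw [hc]
    field_simp
    ring
  have h2sc : 2 * (s : ℝ) * c = 1 + 4 * π ^ 2 * σ ^ 2 * (s : ℝ) := by
    rw [hc]; field_simp; ring
  have hbase : (0:ℝ) < 1 + 4 * π ^ 2 * σ ^ 2 * (s : ℝ) := by positivity
  have h1 : (Real.sqrt (2 * π * (s : ℝ)))⁻¹ * (π / c) ^ ((1 : ℝ) / 2)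
      = (1 + 4 * π ^ 2 * σ ^ 2 * (s : ℝ)) ^ (-(1 : ℝ) / 2) := by
    rw [Real.sqrt_eq_rpow, ← Real.inv_rpow (by positivity),
      ← Real.mul_rpow (by positivity) (by positivity)]
    have hq : (2 * π * (s : ℝ))⁻¹ * (π / c) = (1 + 4 * π ^ 2 * σ ^ 2 * (s : ℝ))⁻¹ := by
      rw [← h2sc]
      field_simp
    rw [hq, Real.inv_rpow hbase.le, ← Real.rpow_neg hbase.le]
    norm_num
  have h2 : -(2 * π * μ) ^ 2 / (4 * c)
      = -2 * π ^ 2 * μ ^ 2 * (s : ℝ) / (1 + 4 * π ^ 2 * σ ^ 2 * (s : ℝ)) := by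
    rw [← h2sc, hc]
    field_simp
    ring
  have h0 : ∫ ω, Real.exp (-2 * π ^ 2 * σ ^ 2 * (Y ω) ^ 2) * Real.cos (2 * π * μ * Y ω) ∂P
      = ∫ ω, g (Y ω) ∂P := rfl
  rw [h0, step1, step2, step3, integral_exp_neg_mul_sq_cos hcpos, h2, ← mul_assoc, h1]
end

section
/- Let σ > 0 and μ > 0, and define h : ℝ → ℝ by h(u) = 2·(1 − exp(−2π²μ²u/(1 + 4π²σ²u)) · (1 + 4π²σ²u)^{−1/2}) for u ≥ 0. If 4π²(μ² + σ²) > 1, then there exists u* with 0 < u* ≤ 2 such that h(u*) = u*. -/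
/-!
The map `h` vanishes at `0` with slope `4π²(μ² + σ²) > 1` there, so `h u > u` for small
`u > 0`; on the other hand `h < 2` everywhere on `[0, ∞)`, since the subtracted product is
positive, so `h 2 < 2`. The intermediate value theorem applied to `h u - u` on the interval
between gives a fixed point in `(0, 2]`.
-/

open Real Set Filter Topology

theorem eventually_lt_of_hasDerivAt_of_one_lt {f : ℝ → ℝ} {a d : ℝ} (hfa : f a = a)
    (hd : HasDerivAt f d a) (hd1 : 1 < d) : ∀ᶠ x in 𝓝[>] a, x < f x := by
  have hslope : ∀ᶠ x in 𝓝[>] a, 1 < slope f a x :=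
    nhdsWithin_mono _ (fun _ hx => ne_of_gt hx)
      ((hasDerivAt_iff_tendsto_slope.mp hd).eventually (eventually_gt_nhds hd1))
  filter_upwards [hslope, self_mem_nhdsWithin] with x hx hax
  have hpos : 0 < x - a := sub_pos.mpr hax
  rw [slope_def_field, hfa, one_lt_div hpos] at hx
  linarith

theorem exists_fixedPoint_mem_Ioc_of_one_lt_deriv {f : ℝ → ℝ} {a c d : ℝ} (hac : a < c)
    (hf : ContinuousOn f (Icc a c)) (hfa : f a = a) (hd : HasDerivAt f d a) (hd1 : 1 < d)
    (hfc : f c ≤ c) : ∃ x ∈ Ioc a c, f x = x := by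
  obtain ⟨u, hu_lt, hu⟩ := ((eventually_lt_of_hasDerivAt_of_one_lt hfa hd hd1).and
    (Ioo_mem_nhdsGT hac)).exists
  have hcont : ContinuousOn (fun x => f x - x) (Icc u c) :=
    (hf.mono (Icc_subset_Icc_left hu.1.le)).sub continuousOn_id
  obtain ⟨x, hx, hfx⟩ := intermediate_value_Icc' hu.2.le hcont
    (show (0 : ℝ) ∈ Icc (f c - c) (f u - u) from ⟨by linarith, by linarith⟩)
  exact ⟨x, ⟨hu.1.trans_le hx.1, hx.2⟩, sub_eq_zero.mp hfx⟩

/-- The recurrence map of the spectral mixture kernel, with `a = 2π²μ²` and `b = 4π²σ²`. -/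
noncomputable def smMap (a b u : ℝ) : ℝ :=
  2 * (1 - exp (-(a * u) / (1 + b * u)) * (1 + b * u) ^ (-(1 : ℝ) / 2))

namespace smMap

variable {a b : ℝ}

theorem map_zero : smMap a b 0 = 0 := by
  simp [smMap]

theorem hasDerivAt_zero : HasDerivAt (smMap a b) (2 * a + b) 0 := by
  have hden : HasDerivAt (fun u : ℝ => 1 + b * u) b 0 := by
    simpa using ((hasDerivAt_id (0 : ℝ)).const_mul b).const_add 1
  have hexp : HasDerivAt (fun u : ℝ => exp (-(a * u) / (1 + b * u))) (-a) 0 := by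
    have hnum : HasDerivAt (fun u : ℝ => -(a * u)) (-a) 0 := by
      simpa using ((hasDerivAt_id' (0 : ℝ)).const_mul a).fun_neg
    simpa using (hnum.div hden (by norm_num)).exp
  have hpow : HasDerivAt (fun u : ℝ => (1 + b * u) ^ (-(1 : ℝ) / 2)) (-(b / 2)) 0 := by
    convert hden.rpow_const (p := -(1 : ℝ) / 2) (Or.inl (by norm_num)) using 1
    simp only [mul_zero, add_zero, one_rpow]
    ring
  refine (((hexp.mul hpow).const_sub 1).const_mul 2).congr_deriv ?_
  simp only [mul_zero, add_zero, neg_zero, zero_div, exp_zero, one_rpow]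
  ring

theorem continuousOn (hb : 0 ≤ b) : ContinuousOn (smMap a b) (Ici 0) := by
  have hden : ∀ u ∈ Ici (0 : ℝ), 1 + b * u ≠ 0 := fun u hu => by
    have : (0 : ℝ) ≤ u := hu
    positivity
  have hden_cont : ContinuousOn (fun u : ℝ => 1 + b * u) (Ici 0) := by fun_prop
  unfold smMap
  refine continuousOn_const.mul (continuousOn_const.sub (ContinuousOn.mul ?_ ?_))
  · exact continuous_exp.comp_continuousOn
      ((continuous_const_mul a).neg.continuousOn.div hden_cont hden)
  · exact hden_cont.rpow_const fun u hu => Or.inl (hden u hu)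

theorem lt_two (hb : 0 ≤ b) {u : ℝ} (hu : 0 ≤ u) : smMap a b u < 2 := by
  have hpos : 0 < exp (-(a * u) / (1 + b * u)) * (1 + b * u) ^ (-(1 : ℝ) / 2) :=
    mul_pos (exp_pos _) (rpow_pos_of_pos (by positivity) _)
  unfold smMap
  linarith

theorem exists_fixedPoint_mem_Ioc (hb : 0 ≤ b) (hab : 1 < 2 * a + b) :
    ∃ u ∈ Ioc (0 : ℝ) 2, smMap a b u = u :=
  exists_fixedPoint_mem_Ioc_of_one_lt_deriv two_pos
    ((continuousOn hb).mono Icc_subset_Ici_self) map_zero hasDerivAt_zero hab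
    (lt_two hb zero_le_two).le

end smMap

theorem sm_recurrence_has_positive_fixed_point_general
    (σ μ : ℝ)
    (h : ℝ → ℝ)
    (hh : ∀ u ≥ (0 : ℝ), h u
      = 2 * (1 - Real.exp (-(2 * π ^ 2 * μ ^ 2 * u) / (1 + 4 * π ^ 2 * σ ^ 2 * u))
          * (1 + 4 * π ^ 2 * σ ^ 2 * u) ^ (-(1 : ℝ) / 2)))
    (hcond : 4 * π ^ 2 * (μ ^ 2 + σ ^ 2) > 1) :
    ∃ ustar : ℝ, 0 < ustar ∧ ustar ≤ 2 ∧ h ustar = ustar := by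
  have hb : 0 ≤ 4 * π ^ 2 * σ ^ 2 := by positivity
  have hab : 1 < 2 * (2 * π ^ 2 * μ ^ 2) + 4 * π ^ 2 * σ ^ 2 := by linarith
  obtain ⟨u, ⟨hu0, hu2⟩, hfix⟩ := smMap.exists_fixedPoint_mem_Ioc hb hab
  exact ⟨u, hu0, hu2, (hh u hu0.le).trans hfix⟩

/-- If `4π²(μ² + σ²) > 1`, the spectral-mixture recurrence map
`h(u) = 2(1 − exp(−2π²μ²u/(1 + 4π²σ²u))·(1 + 4π²σ²u)^{−1/2})` has a
fixed point `u*` with `0 < u* ≤ 2`. -/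
theorem sm_recurrence_has_positive_fixed_point
    (σ μ : ℝ) (hσ : 0 < σ) (hμ : 0 < μ)
    (h : ℝ → ℝ)
    (hh : ∀ u ≥ (0 : ℝ), h u
      = 2 * (1 - Real.exp (-(2 * π ^ 2 * μ ^ 2 * u) / (1 + 4 * π ^ 2 * σ ^ 2 * u))
          * (1 + 4 * π ^ 2 * σ ^ 2 * u) ^ (-(1 : ℝ) / 2)))
    (hcond : 4 * π ^ 2 * (μ ^ 2 + σ ^ 2) > 1) :
    ∃ ustar : ℝ, 0 < ustar ∧ ustar ≤ 2 ∧ h ustar = ustar :=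
  sm_recurrence_has_positive_fixed_point_general σ μ h hh hcond
end

section
/- Let σ > 0 and p > 0, and define h : ℝ → ℝ by h(u) = 2σ²·(1 − exp(−π²u/(2p²))). Then for all u ≥ 0 one has h(u) ≤ (π²σ²/p²)·u; consequently, if π²σ² < p², then for every u₀ ≥ 0 the sequence defined by u_n = h(u_{n−1}) satisfies u_n ≤ (π²σ²/p²)ⁿ·u₀ for all n, and u_n tends to 0 as n → ∞. -/
open Real Filter

/-- The cosine-kernel recurrence map `h(u) = 2σ²(1 − exp(−π²u/(2p²)))` satisfies
`h(u) ≤ (π²σ²/p²)u` for `u ≥ 0`; hence if `π²σ² < p²`, every orbit `u_n = h(u_{n−1})`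
with `u₀ ≥ 0` satisfies `u_n ≤ (π²σ²/p²)ⁿ u₀` and tends to `0`. -/
theorem cos_kernel_recurrence_pathology
    (σ p : ℝ) (hσ : 0 < σ) (hp : 0 < p)
    (h : ℝ → ℝ)
    (hh : ∀ u : ℝ, h u = 2 * σ ^ 2 * (1 - Real.exp (-(π ^ 2 * u) / (2 * p ^ 2)))) :
    (∀ u ≥ (0 : ℝ), h u ≤ (π ^ 2 * σ ^ 2 / p ^ 2) * u) ∧
    (π ^ 2 * σ ^ 2 < p ^ 2 →
      ∀ u₀ ≥ (0 : ℝ), ∀ u : ℕ → ℝ, u 0 = u₀ → (∀ n, u (n + 1) = h (u n)) →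
        (∀ n, u n ≤ (π ^ 2 * σ ^ 2 / p ^ 2) ^ n * u₀) ∧
        Tendsto u atTop (nhds 0)) := by
  have hp2 : (0:ℝ) < p ^ 2 := by positivity
  have hσ2 : (0:ℝ) < σ ^ 2 := by positivity
  have key : ∀ u ≥ (0 : ℝ), h u ≤ (π ^ 2 * σ ^ 2 / p ^ 2) * u := by
    intro u hu
    rw [hh]
    have hx : 1 - Real.exp (-(π ^ 2 * u) / (2 * p ^ 2)) ≤ π ^ 2 * u / (2 * p ^ 2) := by
      rw [neg_div]
      linarith [Real.add_one_le_exp (-(π ^ 2 * u / (2 * p ^ 2)))]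
    have h2 : 2 * σ ^ 2 * (1 - Real.exp (-(π ^ 2 * u) / (2 * p ^ 2)))
        ≤ 2 * σ ^ 2 * (π ^ 2 * u / (2 * p ^ 2)) := by nlinarith
    calc _ ≤ 2 * σ ^ 2 * (π ^ 2 * u / (2 * p ^ 2)) := h2
      _ = (π ^ 2 * σ ^ 2 / p ^ 2) * u := by field_simp
  have hnonneg : ∀ u ≥ (0 : ℝ), 0 ≤ h u := by
    intro u hu
    rw [hh]
    have : Real.exp (-(π ^ 2 * u) / (2 * p ^ 2)) ≤ 1 := by
      rw [Real.exp_le_one_iff]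
      have : 0 ≤ π ^ 2 * u := by positivity
      have h2p : (0:ℝ) < 2 * p ^ 2 := by positivity
      exact div_nonpos_of_nonpos_of_nonneg (by linarith) (le_of_lt h2p)
    nlinarith
  refine ⟨key, fun hc u₀ hu₀ u h0 hrec => ?_⟩
  set c : ℝ := π ^ 2 * σ ^ 2 / p ^ 2 with hcdef
  have hc0 : 0 ≤ c := by positivity
  have hc1 : c < 1 := (div_lt_one hp2).mpr hc
  have hun : ∀ n, 0 ≤ u n ∧ u n ≤ c ^ n * u₀ := by
    intro n
    induction n with
    | zero => simpa [h0] using hu₀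
    | succ n ih =>
      obtain ⟨h1, h2⟩ := ih
      constructor
      · rw [hrec]; exact hnonneg _ h1
      · rw [hrec]
        calc h (u n) ≤ c * u n := key _ h1
          _ ≤ c * (c ^ n * u₀) := by nlinarith
          _ = c ^ (n + 1) * u₀ := by ring
  refine ⟨fun n => (hun n).2, ?_⟩
  have htend : Tendsto (fun n => c ^ n * u₀) atTop (nhds 0) := by
    have := tendsto_pow_atTop_nhds_zero_of_lt_one hc0 hc1
    simpa using this.mul_const u₀
  exact squeeze_zero (fun n => (hun n).1) (fun n => (hun n).2) htend
end

section
/- Let σ > 0 and p > 0 with π²σ² > p², and define h : ℝ → ℝ by h(u) = 2σ²·(1 − exp(−π²u/(2p²))). Then h has a unique fixed point u* > 0 in (0, ∞), and for every u₀ > 0 the sequence defined by u_n = h(u_{n−1}) converges to u* as n → ∞. -/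
open Real Filter

/-- If `π²σ² > p²`, the cosine-kernel recurrence map
`h(u) = 2σ²(1 − exp(−π²u/(2p²)))` has a unique fixed point `u* > 0` in `(0, ∞)`,
and every orbit started at `u₀ > 0` converges to `u*`. -/
theorem cos_kernel_recurrence_escapes_pathology
    (σ p : ℝ) (hσ : 0 < σ) (hp : 0 < p) (hcond : π ^ 2 * σ ^ 2 > p ^ 2)
    (h : ℝ → ℝ)
    (hh : ∀ u : ℝ, h u = 2 * σ ^ 2 * (1 - Real.exp (-(π ^ 2 * u) / (2 * p ^ 2)))) :
    ∃ ustar : ℝ, 0 < ustar ∧ h ustar = ustar ∧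
      (∀ v : ℝ, 0 < v → h v = v → v = ustar) ∧
      (∀ u₀ : ℝ, 0 < u₀ → ∀ u : ℕ → ℝ, u 0 = u₀ → (∀ n, u (n + 1) = h (u n)) →
        Tendsto u atTop (nhds ustar)) := by
  have hπ : 0 < π := Real.pi_pos
  have hs2 : (0:ℝ) < σ ^ 2 := by positivity
  set c : ℝ := π ^ 2 / (2 * p ^ 2) with hc
  have hc0 : 0 < c := by positivity
  have hh' : ∀ u, h u = 2 * σ ^ 2 * (1 - Real.exp (-(c * u))) := by
    intro u
    rw [hh]
    congr 2
    rw [hc]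
    ring
  set K : ℝ := 2 * σ ^ 2 * c with hKdef
  have hKpos : 0 < K := by positivity
  have hK : 1 < K := by
    have hKval : K = π ^ 2 * σ ^ 2 / p ^ 2 := by rw [hKdef, hc]; field_simp
    rw [hKval, lt_div_iff₀ (by positivity)]
    linarith
  -- key strict concavity-through-origin inequality
  have key : ∀ a b : ℝ, 0 < a → a < b → a * h b < b * h a := by
    intro a b ha hab
    have hb : 0 < b := ha.trans hab
    have hbne : b ≠ 0 := ne_of_gt hb
    have ht : 0 < a / b := by positivity
    have ht1 : a / b < 1 := (div_lt_one hb).mpr hab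
    have hx : -(c * b) ≠ (0:ℝ) := by nlinarith
    have hconv := strictConvexOn_exp.2 (Set.mem_univ (-(c*b))) (Set.mem_univ (0:ℝ))
      hx ht (by linarith : (0:ℝ) < 1 - a / b) (by ring)
    rw [smul_eq_mul, smul_eq_mul, smul_eq_mul, smul_eq_mul] at hconv
    have harg : a / b * (-(c * b)) + (1 - a / b) * 0 = -(c * a) := by
      field_simp
      ring
    rw [harg, Real.exp_zero] at hconv
    -- hconv : exp (-(c*a)) < a/b * exp (-(c*b)) + (1 - a/b) * 1
    have step1 : b * Real.exp (-(c*a)) < b * (a / b * Real.exp (-(c*b)) + (1 - a / b) * 1) :=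
      mul_lt_mul_of_pos_left hconv hb
    have step2 : b * (a / b * Real.exp (-(c*b)) + (1 - a / b) * 1)
        = a * Real.exp (-(c*b)) + b - a := by
      field_simp; ring
    rw [step2] at step1
    rw [hh' a, hh' b]
    nlinarith [step1, hs2]
  -- strict monotonicity
  have hmono : ∀ a b : ℝ, a < b → h a < h b := by
    intro a b hab
    rw [hh' a, hh' b]
    have : Real.exp (-(c*b)) < Real.exp (-(c*a)) := Real.exp_lt_exp.mpr (by nlinarith)
    nlinarith [hs2]
  -- h u < 2σ²
  have hlt2 : ∀ u, h u < 2 * σ ^ 2 := by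
    intro u
    rw [hh' u]
    nlinarith [Real.exp_pos (-(c*u)), hs2]
  -- continuity
  have hcont : Continuous h := by
    have hfun : h = fun u => 2 * σ ^ 2 * (1 - Real.exp (-(c * u))) := funext hh'
    rw [hfun]
    exact continuous_const.mul (continuous_const.sub
      (Real.continuous_exp.comp ((continuous_const.mul continuous_id).neg)))
  -- a point δ with δ < h δ
  have hlogK : 0 < Real.log K := Real.log_pos hK
  set δ : ℝ := Real.log K / (2 * c) with hδdef
  have hδ : 0 < δ := by positivity
  have hcd : c * δ = Real.log K / 2 := by
    rw [hδdef]; field_simp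
  have hδlt : δ < h δ := by
    set A : ℝ := Real.exp (-(c*δ)) with hA
    have hApos : 0 < A := Real.exp_pos _
    have hAmul : A * Real.exp (c*δ) = 1 := by
      rw [hA, ← Real.exp_add]; simp
    have hx := Real.add_one_lt_exp (by positivity : c * δ ≠ 0)
    have s1 : A * (c*δ + 1) < A * Real.exp (c*δ) := mul_lt_mul_of_pos_left hx hApos
    rw [hAmul] at s1
    have s3 : A * c * δ < 1 - A := by nlinarith
    have s4 : 2 * σ ^ 2 * (A * c * δ) < 2 * σ ^ 2 * (1 - A) :=
      mul_lt_mul_of_pos_left s3 (by positivity)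
    have hE : A * K = Real.exp (Real.log K / 2) := by
      rw [hA, hcd, ← Real.exp_log hKpos, ← Real.exp_add]
      congr 1
      rw [Real.log_exp]
      ring
    have s5 : 2 * σ ^ 2 * (A * c * δ) = (A * K) * δ := by rw [hKdef]; ring
    have hKexp : 1 < Real.exp (Real.log K / 2) := by
      rw [show (1:ℝ) = Real.exp 0 from (Real.exp_zero).symm]
      exact Real.exp_lt_exp.mpr (by positivity)
    have s7 : δ < Real.exp (Real.log K / 2) * δ := by nlinarith
    rw [hh' δ]
    calc δ < Real.exp (Real.log K / 2) * δ := s7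
      _ = (A * K) * δ := by rw [hE]
      _ = 2 * σ ^ 2 * (A * c * δ) := s5.symm
      _ < 2 * σ ^ 2 * (1 - A) := s4
  -- existence of fixed point via IVT
  have hδlt2 : δ ≤ 2 * σ ^ 2 := le_of_lt (hδlt.trans (hlt2 δ))
  have hIVT := intermediate_value_Icc' hδlt2
    ((hcont.sub continuous_id).continuousOn : ContinuousOn (fun u => h u - u) (Set.Icc δ (2*σ^2)))
  have hmem : (0:ℝ) ∈ Set.Icc (h (2*σ^2) - 2*σ^2) (h δ - δ) := by
    constructor
    · linarith [hlt2 (2*σ^2)]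
    · linarith [hδlt]
  obtain ⟨ustar, hustar_mem, hustar_eq⟩ := hIVT hmem
  have hufix : h ustar = ustar := by
    have : h ustar - ustar = 0 := hustar_eq
    linarith
  have hupos : 0 < ustar := lt_of_lt_of_le hδ hustar_mem.1
  -- uniqueness
  have huniq : ∀ v : ℝ, 0 < v → h v = v → v = ustar := by
    intro v hv hfv
    rcases lt_trichotomy v ustar with hlt | heq | hgt
    · exfalso
      have := key v ustar hv hlt
      rw [hfv, hufix, mul_comm] at this
      exact lt_irrefl _ this
    · exact heq
    · exfalso
      have := key ustar v hupos hgt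
      rw [hfv, hufix, mul_comm] at this
      exact lt_irrefl _ this
  -- sign facts
  have hbelow : ∀ v : ℝ, 0 < v → v < ustar → v < h v ∧ h v < ustar := by
    intro v hv hlt
    constructor
    · have := key v ustar hv hlt
      rw [hufix] at this
      have h2 : ustar * v < ustar * h v := by rw [mul_comm ustar v]; exact this
      exact (mul_lt_mul_iff_right₀ hupos).mp h2
    · have := hmono v ustar hlt
      rwa [hufix] at this
  have habove : ∀ v : ℝ, ustar < v → ustar < h v ∧ h v < v := by
    intro v hlt
    constructor
    · have := hmono ustar v hlt
      rwa [hufix] at this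
    · have := key ustar v hupos hlt
      rw [hufix] at this
      have h2 : ustar * h v < ustar * v := by rw [mul_comm ustar v]; exact this
      exact (mul_lt_mul_iff_right₀ hupos).mp h2
  refine ⟨ustar, hupos, hufix, huniq, ?_⟩
  intro u₀ hu₀ u hu0 hstep
  rcases lt_trichotomy u₀ ustar with hlt | heq | hgt
  · -- increasing case
    have inv : ∀ n, 0 < u n ∧ u n < ustar := by
      intro n
      induction n with
      | zero => rw [hu0]; exact ⟨hu₀, hlt⟩
      | succ k ih =>
        rw [hstep k]
        obtain ⟨h1, h2⟩ := hbelow (u k) ih.1 ih.2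
        exact ⟨ih.1.trans h1, h2⟩
    have mono : Monotone u := monotone_nat_of_le_succ (fun n => by
      rw [hstep n]
      exact le_of_lt (hbelow (u n) (inv n).1 (inv n).2).1)
    have bdd : BddAbove (Set.range u) := ⟨ustar, by rintro x ⟨n, rfl⟩; exact (inv n).2.le⟩
    have htend : Tendsto u atTop (nhds (⨆ n, u n)) := tendsto_atTop_ciSup mono bdd
    set L : ℝ := ⨆ n, u n with hL
    have hL0 : 0 < L := lt_of_lt_of_le (inv 0).1 (le_ciSup bdd 0)
    have h1 : Tendsto (fun n => u (n+1)) atTop (nhds L) :=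
      htend.comp (tendsto_add_atTop_nat 1)
    have h2 : Tendsto (fun n => h (u n)) atTop (nhds (h L)) :=
      (hcont.tendsto L).comp htend
    have heq : (fun n => h (u n)) = fun n => u (n+1) := funext fun n => (hstep n).symm
    rw [heq] at h2
    have hfixL : h L = L := tendsto_nhds_unique h2 h1
    rwa [huniq L hL0 hfixL] at htend
  · -- constant case
    have : ∀ n, u n = ustar := by
      intro n
      induction n with
      | zero => rw [hu0, heq]
      | succ k ih => rw [hstep k, ih, hufix]
    have hu : u = fun _ => ustar := funext this
    rw [hu]
    exact tendsto_const_nhds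
  · -- decreasing case
    have inv : ∀ n, ustar < u n := by
      intro n
      induction n with
      | zero => rw [hu0]; exact hgt
      | succ k ih =>
        rw [hstep k]
        exact (habove (u k) ih).1
    have anti : Antitone u := antitone_nat_of_succ_le (fun n => by
      rw [hstep n]
      exact le_of_lt (habove (u n) (inv n)).2)
    have bdd : BddBelow (Set.range u) := ⟨ustar, by rintro x ⟨n, rfl⟩; exact (inv n).le⟩
    have htend : Tendsto u atTop (nhds (⨅ n, u n)) := tendsto_atTop_ciInf anti bdd
    set L : ℝ := ⨅ n, u n with hL
    have hL0 : 0 < L := by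
      have : ustar ≤ L := le_ciInf (fun n => (inv n).le)
      linarith
    have h1 : Tendsto (fun n => u (n+1)) atTop (nhds L) :=
      htend.comp (tendsto_add_atTop_nat 1)
    have h2 : Tendsto (fun n => h (u n)) atTop (nhds (h L)) :=
      (hcont.tendsto L).comp htend
    have heq : (fun n => h (u n)) = fun n => u (n+1) := funext fun n => (hstep n).symm
    rw [heq] at h2
    have hfixL : h L = L := tendsto_nhds_unique h2 h1
    rwa [huniq L hL0 hfixL] at htend
end

section
/- Let Y be a real random variable distributed according to the Gaussian measure N(0, s) with s > 0, and let p > 0 and ℓ > 0. Then E[exp(−2·sin²(πY/p)/ℓ²)] ≥ 1 − (1/ℓ²)·(1 − exp(−2π²s/p²)). -/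
open MeasureTheory ProbabilityTheory Real Complex
open scoped NNReal ENNReal

lemma integral_cos_mul_gauss (s : ℝ≥0) (hs : s ≠ 0) (c : ℝ) :
    ∫ x : ℝ, Real.cos (c * x) * Real.exp (-x ^ 2 / (2 * s))
      = Real.sqrt (2 * π * s) * Real.exp (-(c ^ 2 * s) / 2) := by
  have hs' : (0:ℝ) < s := lt_of_le_of_ne s.coe_nonneg (by exact_mod_cast (Ne.symm hs))
  set b : ℂ := (1 / (2 * (s:ℝ)) : ℂ) with hb
  have hbre : 0 < b.re := by simp [hb]; positivity
  have key := fourierIntegral_gaussian hbre (c : ℂ)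
  have hint : Integrable (fun x : ℝ => cexp (I * (c:ℂ) * x) * cexp (-b * x ^ 2)) := by
    have := integrable_cexp_quadratic hbre (I * c) 0
    simpa [Complex.exp_add, mul_comm] using this
  have hre : ∀ x : ℝ, (cexp (I * (c:ℂ) * x) * cexp (-b * x ^ 2)).re
      = Real.cos (c * x) * Real.exp (-x ^ 2 / (2 * (s:ℝ))) := by
    intro x
    rw [← Complex.exp_add, Complex.exp_re]
    have h1 : (I * (c:ℂ) * x + -b * x ^ 2).re = -x ^ 2 / (2 * (s:ℝ)) := by
      simp [hb, ← Complex.ofReal_pow]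
      ring
    have h2 : (I * (c:ℂ) * x + -b * x ^ 2).im = c * x := by
      simp [hb, ← Complex.ofReal_pow]
    rw [h1, h2]; ring
  have hL : (∫ x : ℝ, cexp (I * (c:ℂ) * x) * cexp (-b * x ^ 2)).re
      = ∫ x : ℝ, Real.cos (c * x) * Real.exp (-x ^ 2 / (2 * (s:ℝ))) := by
    have h := integral_re hint
    simp only [RCLike.re_to_complex] at h
    rw [← h]
    exact integral_congr_ae (Filter.Eventually.of_forall fun x => (hre x))
  have hRHS : ((π / b) ^ (1 / 2 : ℂ) * cexp (-(c:ℂ) ^ 2 / (4 * b)))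
      = ((Real.sqrt (2 * π * s) * Real.exp (-(c ^ 2 * s) / 2) : ℝ) : ℂ) := by
    have e1 : (π / b : ℂ) = ((2 * π * (s:ℝ) : ℝ) : ℂ) := by
      rw [hb]; push_cast; field_simp
    have e2 : (-(c:ℂ) ^ 2 / (4 * b)) = ((-(c ^ 2 * (s:ℝ)) / 2 : ℝ) : ℂ) := by
      rw [hb]; push_cast; field_simp; ring
    rw [e1, e2, show (1/2 : ℂ) = ((1/2 : ℝ) : ℂ) by norm_num,
      ← Complex.ofReal_cpow (by positivity), ← Complex.ofReal_exp, ← Complex.ofReal_mul,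
      Real.sqrt_eq_rpow]
  rw [key, hRHS] at hL
  rw [← hL, Complex.ofReal_re]

lemma integral_cos_gaussianReal (s : ℝ≥0) (hs : s ≠ 0) (c : ℝ) :
    ∫ x, Real.cos (c * x) ∂gaussianReal 0 s = Real.exp (-(c ^ 2 * s) / 2) := by
  have hs' : (0:ℝ) < s := lt_of_le_of_ne s.coe_nonneg (by exact_mod_cast (Ne.symm hs))
  rw [gaussianReal_of_var_ne_zero _ hs]
  have hpdf : gaussianPDF 0 s = fun x => (((gaussianPDFReal 0 s x).toNNReal : ℝ≥0) : ℝ≥0∞) := by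
    funext x; rfl
  rw [hpdf, integral_withDensity_eq_integral_smul
    ((measurable_gaussianPDFReal 0 s).real_toNNReal) (fun x => Real.cos (c * x))]
  have heq : ∀ x : ℝ, (gaussianPDFReal 0 s x).toNNReal • Real.cos (c * x)
      = (Real.sqrt (2 * π * s))⁻¹ * (Real.cos (c * x) * Real.exp (-x ^ 2 / (2 * s))) := by
    intro x
    rw [NNReal.smul_def, smul_eq_mul, Real.coe_toNNReal _ (gaussianPDFReal_nonneg 0 s x),
      gaussianPDFReal]
    ring_nf
  simp_rw [heq]
  rw [integral_const_mul, integral_cos_mul_gauss s hs c, ← mul_assoc,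
    inv_mul_cancel₀ (by positivity : Real.sqrt (2 * π * s) ≠ 0), one_mul]

/-- Lower bound for the Gaussian expectation of the periodic kernel: if `Y ~ N(0, s)`,
`E[exp(−2sin²(πY/p)/ℓ²)] ≥ 1 − (1/ℓ²)·(1 − exp(−2π²s/p²))`. -/
theorem periodic_kernel_gaussian_expectation_lower_bound
    {Ω : Type*} [MeasurableSpace Ω] (P : Measure Ω) [IsProbabilityMeasure P]
    (s : ℝ≥0) (hs : 0 < s)
    (Y : Ω → ℝ) (hmeas : Measurable Y)
    (hlaw : Measure.map Y P = gaussianReal 0 s)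
    (p ℓ : ℝ) (hp : 0 < p) (hℓ : 0 < ℓ) :
    ∫ ω, Real.exp (-2 * Real.sin (π * Y ω / p) ^ 2 / ℓ ^ 2) ∂P
      ≥ 1 - (1 / ℓ ^ 2) * (1 - Real.exp (-(2 * π ^ 2 * (s : ℝ)) / p ^ 2)) := by
  set μ := gaussianReal 0 s with hμ
  set c : ℝ := 2 * π / p with hc
  set f : ℝ → ℝ := fun x => Real.exp (-2 * Real.sin (π * x / p) ^ 2 / ℓ ^ 2) with hf
  set g : ℝ → ℝ := fun x => (1 - 1 / ℓ ^ 2) + (1 / ℓ ^ 2) * Real.cos (c * x) with hg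
  have hfc : Continuous f := by
    fun_prop
  have hgc : Continuous g := by fun_prop
  -- transfer to μ
  have h0 : ∫ ω, Real.exp (-2 * Real.sin (π * Y ω / p) ^ 2 / ℓ ^ 2) ∂P = ∫ x, f x ∂μ := by
    rw [← hlaw, integral_map hmeas.aemeasurable hfc.aestronglyMeasurable]
  rw [h0]
  -- pointwise bound
  have hpt : ∀ x : ℝ, g x ≤ f x := by
    intro x
    have h1 : -2 * Real.sin (π * x / p) ^ 2 / ℓ ^ 2
        = (Real.cos (c * x) - 1) / ℓ ^ 2 := by
      have : Real.cos (c * x) = 1 - 2 * Real.sin (π * x / p) ^ 2 := by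
        have : c * x = 2 * (π * x / p) := by rw [hc]; field_simp
        rw [this, Real.cos_two_mul, Real.cos_sq']
        ring
      rw [this]; ring
    rw [hf]
    simp only
    rw [h1]
    have := Real.add_one_le_exp ((Real.cos (c * x) - 1) / ℓ ^ 2)
    have h2 : g x = (Real.cos (c * x) - 1) / ℓ ^ 2 + 1 := by rw [hg]; field_simp; ring
    linarith
  -- integrability
  have hfi : Integrable f μ := by
    refine Integrable.mono' (integrable_const 1) hfc.aestronglyMeasurable ?_
    refine Filter.Eventually.of_forall fun x => ?_
    rw [Real.norm_eq_abs, abs_of_pos (Real.exp_pos _)]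
    refine Real.exp_le_one_iff.mpr ?_
    have : (0:ℝ) ≤ 2 * Real.sin (π * x / p) ^ 2 := by positivity
    have hl2 : (0:ℝ) < ℓ ^ 2 := by positivity
    rw [div_nonpos_iff]
    right
    constructor <;> nlinarith
  have hgi : Integrable g μ := by
    refine Integrable.mono' (integrable_const (1 + 2 / ℓ ^ 2)) hgc.aestronglyMeasurable ?_
    refine Filter.Eventually.of_forall fun x => ?_
    rw [Real.norm_eq_abs, hg]
    simp only
    have h1 := Real.neg_one_le_cos (c * x)
    have h2 := Real.cos_le_one (c * x)
    have hl2 : (0:ℝ) < ℓ ^ 2 := by positivity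
    rw [abs_le]
    have hu : (0:ℝ) < 1 / ℓ ^ 2 := by positivity
    have h2u : (2:ℝ) / ℓ ^ 2 = 2 * (1 / ℓ ^ 2) := by ring
    have k1 : 0 ≤ (1 / ℓ ^ 2) * (Real.cos (c * x) + 1) :=
      mul_nonneg hu.le (by linarith)
    have k2 : 0 ≤ (1 / ℓ ^ 2) * (1 - Real.cos (c * x)) :=
      mul_nonneg hu.le (by linarith)
    constructor <;> nlinarith
  have hmono : ∫ x, g x ∂μ ≤ ∫ x, f x ∂μ :=
    integral_mono hgi hfi hpt
  -- compute ∫ g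
  have hcos : ∫ x, Real.cos (c * x) ∂μ = Real.exp (-(2 * π ^ 2 * (s:ℝ)) / p ^ 2) := by
    rw [hμ, integral_cos_gaussianReal s hs.ne' c]
    congr 1
    rw [hc]
    field_simp
  have hgint : ∫ x, g x ∂μ
      = 1 - (1 / ℓ ^ 2) * (1 - Real.exp (-(2 * π ^ 2 * (s:ℝ)) / p ^ 2)) := by
    rw [hg]
    have hci : Integrable (fun x => Real.cos (c * x)) μ := by
      refine Integrable.mono' (integrable_const 1) (Real.continuous_cos.comp (continuous_const.mul continuous_id)).aestronglyMeasurable ?_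
      exact Filter.Eventually.of_forall fun x => by
        rw [Real.norm_eq_abs]; exact Real.abs_cos_le_one _
    rw [integral_add (integrable_const _) (hci.const_mul _)]
    rw [integral_const, integral_const_mul, hcos]
    simp [measure_univ]
    ring
  linarith
end

section
/- Let m ≥ 1 be a natural number and σ > 0, ℓ > 0 with mσ² < ℓ². Define h : ℝ → ℝ by h(u) = 2mσ²·(1 − (1 + u/(mℓ²))^{−m/2}). Then for every u₀ ≥ 0, the sequence defined by u_n = h(u_{n−1}) satisfies 0 ≤ u_n ≤ (mσ²/ℓ²)ⁿ·u₀ for all n, and in particular u_n tends to 0 as n → ∞. -/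
open Filter

/-! Bernoulli's inequality `(1 + x)^(-q) ≥ 1 - q x` gives `h u ≤ (mσ²/ℓ²) u` on `[0, ∞)`, where
also `h ≥ 0`; so the orbit is squeezed between `0` and a geometric sequence of ratio
`mσ²/ℓ² < 1`. -/

theorem one_sub_mul_le_rpow_one_add_neg {x q : ℝ} (hx : -1 < x) (hq : 0 ≤ q) :
    1 - q * x ≤ (1 + x) ^ (-q) := by
  have hpos : 0 < 1 + x := by linarith
  have hlog : Real.log (1 + x) ≤ x := by linarith [Real.log_le_sub_one_of_pos hpos]
  calc 1 - q * x ≤ Real.log (1 + x) * -q + 1 := by nlinarith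
    _ ≤ Real.exp (Real.log (1 + x) * -q) := Real.add_one_le_exp _
    _ = (1 + x) ^ (-q) := (Real.rpow_def_of_pos hpos _).symm

theorem orbit_bounds_of_le_mul {f : ℝ → ℝ} {c : ℝ} (hc : 0 ≤ c)
    (hf : ∀ v, 0 ≤ v → 0 ≤ f v ∧ f v ≤ c * v) {u : ℕ → ℝ} (hu0 : 0 ≤ u 0)
    (hu : ∀ n, u (n + 1) = f (u n)) (n : ℕ) : 0 ≤ u n ∧ u n ≤ c ^ n * u 0 := by
  induction n with
  | zero => simp [hu0]
  | succ n ih =>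
    obtain ⟨hf0, hfc⟩ := hf (u n) ih.1
    refine ⟨hu n ▸ hf0, ?_⟩
    calc u (n + 1) = f (u n) := hu n
      _ ≤ c * u n := hfc
      _ ≤ c * (c ^ n * u 0) := mul_le_mul_of_nonneg_left ih.2 hc
      _ = c ^ (n + 1) * u 0 := by ring

theorem tendsto_zero_of_le_geometric {u : ℕ → ℝ} {c a : ℝ} (hc0 : 0 ≤ c) (hc1 : c < 1)
    (hu : ∀ n, 0 ≤ u n ∧ u n ≤ c ^ n * a) : Tendsto u atTop (nhds 0) := by
  have hgeom : Tendsto (fun n => c ^ n * a) atTop (nhds 0) := by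
    simpa using (tendsto_pow_atTop_nhds_zero_of_lt_one hc0 hc1).mul_const a
  exact squeeze_zero (fun n => (hu n).1) (fun n => (hu n).2) hgeom

noncomputable def seMap (m σ ℓ : ℝ) (u : ℝ) : ℝ :=
  2 * m * σ ^ 2 * (1 - (1 + u / (m * ℓ ^ 2)) ^ (-m / 2))

section seMap

variable {m σ ℓ v : ℝ}

theorem seMap_nonneg (hm : 0 ≤ m) (hv : 0 ≤ v) : 0 ≤ seMap m σ ℓ v := by
  have hle : (1 + v / (m * ℓ ^ 2)) ^ (-m / 2) ≤ 1 :=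
    Real.rpow_le_one_of_one_le_of_nonpos (by simp only [le_add_iff_nonneg_right]; positivity)
      (by linarith)
  unfold seMap
  exact mul_nonneg (by positivity) (by linarith)

theorem seMap_le (hm : 0 ≤ m) (hv : 0 ≤ v) : seMap m σ ℓ v ≤ m * σ ^ 2 / ℓ ^ 2 * v := by
  have hbern := one_sub_mul_le_rpow_one_add_neg (x := v / (m * ℓ ^ 2))
    (by linarith [show 0 ≤ v / (m * ℓ ^ 2) by positivity]) (by positivity : 0 ≤ m / 2)
  calc seMap m σ ℓ v ≤ 2 * m * σ ^ 2 * (m / 2 * (v / (m * ℓ ^ 2))) := by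
        unfold seMap
        rw [neg_div]
        exact mul_le_mul_of_nonneg_left (by linarith) (by positivity)
    _ = m * σ ^ 2 / ℓ ^ 2 * v := by
        -- at `m = 0` both sides vanish, the division by `m * ℓ ^ 2` giving `0`
        rcases hm.eq_or_lt with rfl | hm
        · simp
        · field_simp

end seMap

theorem se_recurrence_pathology_general
    (m : ℕ) (σ ℓ : ℝ)
    (hcond : (m : ℝ) * σ ^ 2 < ℓ ^ 2)
    (h : ℝ → ℝ)
    (hh : ∀ u : ℝ, h u
      = 2 * (m : ℝ) * σ ^ 2 * (1 - (1 + u / ((m : ℝ) * ℓ ^ 2)) ^ (-(m : ℝ) / 2))) :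
    ∀ u₀ ≥ (0 : ℝ), ∀ u : ℕ → ℝ, u 0 = u₀ → (∀ n, u (n + 1) = h (u n)) →
      (∀ n, 0 ≤ u n ∧ u n ≤ ((m : ℝ) * σ ^ 2 / ℓ ^ 2) ^ n * u₀) ∧
      Tendsto u atTop (nhds 0) := by
  rintro u₀ hu₀ u rfl hu
  have hmσ : 0 ≤ (m : ℝ) * σ ^ 2 := by positivity
  have hc0 : 0 ≤ (m : ℝ) * σ ^ 2 / ℓ ^ 2 := by positivity
  have hc1 : (m : ℝ) * σ ^ 2 / ℓ ^ 2 < 1 := (div_lt_one (by linarith)).mpr hcond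
  have h_eq : h = seMap m σ ℓ := funext hh
  subst h_eq
  have hbounds := orbit_bounds_of_le_mul hc0
    (fun v hv => ⟨seMap_nonneg m.cast_nonneg hv, seMap_le m.cast_nonneg hv⟩) hu₀ hu
  exact ⟨hbounds, tendsto_zero_of_le_geometric hc0 hc1 hbounds⟩

/-- Pathology for the squared exponential kernel: if `mσ² < ℓ²`, every orbit of the
recurrence `u_n = 2mσ²(1 − (1 + u_{n−1}/(mℓ²))^{−m/2})` started at `u₀ ≥ 0` satisfies
`0 ≤ u_n ≤ (mσ²/ℓ²)ⁿ u₀` and tends to `0`. -/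
theorem se_recurrence_pathology
    (m : ℕ) (hm : 1 ≤ m) (σ ℓ : ℝ) (hσ : 0 < σ) (hℓ : 0 < ℓ)
    (hcond : (m : ℝ) * σ ^ 2 < ℓ ^ 2)
    (h : ℝ → ℝ)
    (hh : ∀ u : ℝ, h u
      = 2 * (m : ℝ) * σ ^ 2 * (1 - (1 + u / ((m : ℝ) * ℓ ^ 2)) ^ (-(m : ℝ) / 2))) :
    ∀ u₀ ≥ (0 : ℝ), ∀ u : ℕ → ℝ, u 0 = u₀ → (∀ n, u (n + 1) = h (u n)) →
      (∀ n, 0 ≤ u n ∧ u n ≤ ((m : ℝ) * σ ^ 2 / ℓ ^ 2) ^ n * u₀) ∧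
      Tendsto u atTop (nhds 0) :=
  se_recurrence_pathology_general m σ ℓ hcond h hh
end

section
/- Let m ≥ 1 be a natural number and σ > 0, ℓ > 0 with mσ² > ℓ². Define h : ℝ → ℝ by h(u) = 2mσ²·(1 − (1 + u/(mℓ²))^{−m/2}). Then h has a unique fixed point u* > 0 in (0, ∞), and for every u₀ > 0 the sequence defined by u_n = h(u_{n−1}) converges to u* as n → ∞. -/
open Filter Set

/-- Escaping the pathology for the squared exponential kernel: if `mσ² > ℓ²`, the
recurrence map `h(u) = 2mσ²(1 − (1 + u/(mℓ²))^{−m/2})` has a unique fixed point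
`u* > 0` in `(0, ∞)`, and every orbit started at `u₀ > 0` converges to `u*`. -/
theorem se_recurrence_escapes_pathology
    (m : ℕ) (hm : 1 ≤ m) (σ ℓ : ℝ) (hσ : 0 < σ) (hℓ : 0 < ℓ)
    (hcond : (m : ℝ) * σ ^ 2 > ℓ ^ 2)
    (h : ℝ → ℝ)
    (hh : ∀ u : ℝ, h u
      = 2 * (m : ℝ) * σ ^ 2 * (1 - (1 + u / ((m : ℝ) * ℓ ^ 2)) ^ (-(m : ℝ) / 2))) :
    ∃ ustar : ℝ, 0 < ustar ∧ h ustar = ustar ∧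
      (∀ v : ℝ, 0 < v → h v = v → v = ustar) ∧
      (∀ u₀ : ℝ, 0 < u₀ → ∀ u : ℕ → ℝ, u 0 = u₀ → (∀ n, u (n + 1) = h (u n)) →
        Tendsto u atTop (nhds ustar)) := by
  have hm0 : (0 : ℝ) < (m : ℝ) := by exact_mod_cast Nat.lt_of_lt_of_le Nat.zero_lt_one hm
  set b : ℝ := (m : ℝ) * ℓ ^ 2 with hbdef
  set c : ℝ := 2 * (m : ℝ) * σ ^ 2 with hcdef
  set q : ℝ := -(m : ℝ) / 2 with hqdef
  have hb : 0 < b := mul_pos hm0 (pow_pos hℓ 2)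
  have hc : 0 < c := by positivity
  have hq : q < 0 := by
    rw [hqdef]; apply div_neg_of_neg_of_pos <;> [linarith; norm_num]
  have hform : ∀ u : ℝ, h u = c * (1 - (1 + u / b) ^ q) := hh
  -- derivative of h
  have hd : ∀ u : ℝ, -b < u →
      HasDerivAt h (c * -(b⁻¹ * q * (1 + u / b) ^ (q - 1))) u := by
    intro u hu
    have h1 : (0 : ℝ) < 1 + u / b := by
      have : -1 < u / b := by
        rw [lt_div_iff₀ hb]; linarith
      linarith
    have hid : HasDerivAt (fun x : ℝ => 1 + x / b) b⁻¹ u := by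
      simpa [one_div] using ((hasDerivAt_id u).div_const b).const_add 1
    have hr : HasDerivAt (fun x : ℝ => (1 + x / b) ^ q)
        (b⁻¹ * q * (1 + u / b) ^ (q - 1)) u := hid.rpow_const (Or.inl h1.ne')
    have := (hr.const_sub 1).const_mul c
    have hfun : h = fun u : ℝ => c * (1 - (1 + u / b) ^ q) := funext hform
    rw [hfun]
    simpa using this
  have h1pos : ∀ u : ℝ, -b < u → (0 : ℝ) < 1 + u / b := by
    intro u hu
    have : -1 < u / b := by rw [lt_div_iff₀ hb]; linarith
    linarith
  have hderiv_pos : ∀ u : ℝ, -b < u →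
      0 < c * -(b⁻¹ * q * (1 + u / b) ^ (q - 1)) := by
    intro u hu
    have hR : 0 < (1 + u / b) ^ (q - 1) := Real.rpow_pos_of_pos (h1pos u hu) _
    have hbinv : 0 < b⁻¹ := inv_pos.mpr hb
    have : 0 < b⁻¹ * -q * (1 + u / b) ^ (q - 1) :=
      mul_pos (mul_pos hbinv (neg_pos.mpr hq)) hR
    nlinarith
  -- continuity
  have hcontAt : ∀ u : ℝ, -b < u → ContinuousAt h u := fun u hu => (hd u hu).continuousAt
  have hcont : ContinuousOn h (Ici 0) := fun x hx =>
    (hcontAt x (lt_of_lt_of_le (by linarith) hx)).continuousWithinAt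
  -- h 0 = 0
  have h0 : h 0 = 0 := by
    rw [hform 0]
    simp [Real.one_rpow]
  -- h u < c
  have hltc : ∀ u : ℝ, -b < u → h u < c := by
    intro u hu
    rw [hform u]
    have hR : 0 < (1 + u / b) ^ q := Real.rpow_pos_of_pos (h1pos u hu) _
    nlinarith
  -- strict monotonicity on Ici 0
  have smono : StrictMonoOn h (Ici 0) := by
    apply strictMonoOn_of_deriv_pos (convex_Ici 0) hcont
    intro x hx
    rw [interior_Ici] at hx
    have hxb : -b < x := by have : (0:ℝ) < x := hx; linarith
    rw [(hd x hxb).deriv]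
    exact hderiv_pos x hxb
  have mono : MonotoneOn h (Ici 0) := smono.monotoneOn
  -- strict concavity on Ici 0
  have sconc : StrictConcaveOn ℝ (Ici 0) h := by
    apply strictConcaveOn_of_deriv2_neg (convex_Ici 0) hcont
    intro x hx
    rw [interior_Ici] at hx
    have hxb : -b < x := by have : (0:ℝ) < x := hx; linarith
    show deriv (deriv h) x < 0
    set φ : ℝ → ℝ := fun u => c * -(b⁻¹ * q * (1 + u / b) ^ (q - 1)) with hφdef
    have hev : deriv h =ᶠ[nhds x] φ := by
      filter_upwards [isOpen_Ioi.mem_nhds (show -b < x from hxb)] with y hy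
      exact (hd y hy).deriv
    rw [hev.deriv_eq]
    have hid : HasDerivAt (fun x : ℝ => 1 + x / b) b⁻¹ x := by
      simpa [one_div] using ((hasDerivAt_id x).div_const b).const_add 1
    have hr2 : HasDerivAt (fun y : ℝ => (1 + y / b) ^ (q - 1))
        (b⁻¹ * (q - 1) * (1 + x / b) ^ (q - 1 - 1)) x :=
      hid.rpow_const (Or.inl (h1pos x hxb).ne')
    have hφd : HasDerivAt φ
        ((c * -(b⁻¹ * q)) * (b⁻¹ * (q - 1) * (1 + x / b) ^ (q - 1 - 1))) x := by
      have := hr2.const_mul (c * -(b⁻¹ * q))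
      have hfun : φ = fun u : ℝ => (c * -(b⁻¹ * q)) * (1 + u / b) ^ (q - 1) := by
        funext u; rw [hφdef]; ring
      rw [hfun]
      exact this
    rw [hφd.deriv]
    have hR : 0 < (1 + x / b) ^ (q - 1 - 1) := Real.rpow_pos_of_pos (h1pos x hxb) _
    have hbinv : 0 < b⁻¹ := inv_pos.mpr hb
    have hK : 0 < c * -(b⁻¹ * q) := by
      have h1 : 0 < c * b⁻¹ * -q := mul_pos (mul_pos hc hbinv) (neg_pos.mpr hq)
      nlinarith
    have hq1 : q - 1 < 0 := by linarith
    nlinarith [mul_pos (mul_pos hK hbinv) hR]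
  -- derivative at 0 exceeds 1
  have hκ : HasDerivAt h (c * -(b⁻¹ * q)) 0 := by
    have := hd 0 (by linarith)
    have he : (1 : ℝ) + 0 / b = 1 := by simp
    rw [he, Real.one_rpow] at this
    simpa using this
  have h1κ : 1 < c * -(b⁻¹ * q) := by
    have hl2 : (0 : ℝ) < ℓ ^ 2 := pow_pos hℓ 2
    have hval : c * -(b⁻¹ * q) = (m : ℝ) * σ ^ 2 / ℓ ^ 2 := by
      rw [hcdef, hbdef, hqdef]
      field_simp
    rw [hval]
    exact (one_lt_div hl2).mpr hcond
  -- a point u₁ > 0 with u₁ < h u₁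
  obtain ⟨u₁, hu₁slope, hu₁pos⟩ :
      ∃ x : ℝ, 1 < slope h 0 x ∧ x ∈ Ioi (0 : ℝ) := by
    have hslope : Tendsto (slope h 0) (nhdsWithin 0 {(0:ℝ)}ᶜ) (nhds (c * -(b⁻¹ * q))) :=
      hasDerivAt_iff_tendsto_slope.mp hκ
    have hmono : nhdsWithin (0:ℝ) (Ioi 0) ≤ nhdsWithin 0 {(0:ℝ)}ᶜ :=
      nhdsWithin_mono _ (fun x hx => ne_of_gt hx)
    have hev : ∀ᶠ x in nhdsWithin (0:ℝ) (Ioi 0), 1 < slope h 0 x :=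
      (hslope.mono_left hmono).eventually (eventually_gt_nhds h1κ)
    exact (hev.and eventually_mem_nhdsWithin).exists
  have hu₁lt : u₁ < h u₁ := by
    have hp : (0:ℝ) < u₁ := hu₁pos
    rw [slope_def_field, h0, sub_zero, sub_zero] at hu₁slope
    calc u₁ = 1 * u₁ := (one_mul u₁).symm
    _ < (h u₁ / u₁) * u₁ := by exact mul_lt_mul_of_pos_right hu₁slope hp
    _ = h u₁ := by field_simp
  have hp₁ : (0:ℝ) < u₁ := hu₁pos
  -- IVT: fixed point ustar in (u₁, c)
  have hu₁c : u₁ < c := lt_trans hu₁lt (hltc u₁ (by linarith))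
  have hgc : h c - c < 0 := by have := hltc c (by linarith); linarith
  have hgu₁ : 0 < h u₁ - u₁ := by linarith
  have hcontg : ContinuousOn (fun u => h u - u) (Icc u₁ c) := by
    intro x hx
    have hxb : -b < x := by have := hx.1; linarith
    exact ((hcontAt x hxb).sub continuousAt_id).continuousWithinAt
  obtain ⟨ustar, hmem, hgz⟩ : ∃ x ∈ Ioo u₁ c, h x - x = 0 := by
    have := intermediate_value_Ioo' (le_of_lt hu₁c) hcontg (a := u₁) (b := c)
    have h0mem : (0:ℝ) ∈ Ioo (h c - c) (h u₁ - u₁) := ⟨hgc, hgu₁⟩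
    obtain ⟨x, hx, hfx⟩ := this h0mem
    exact ⟨x, hx, hfx⟩
  have hupos : 0 < ustar := lt_trans hp₁ hmem.1
  have hfix : h ustar = ustar := by linarith
  -- sign lemmas via strict concavity
  have lemA : ∀ u : ℝ, 0 < u → u < ustar → u < h u := by
    intro u hu0 hult
    have ht0 : 0 < u / ustar := div_pos hu0 hupos
    have ht1 : u / ustar < 1 := (div_lt_one hupos).mpr hult
    have := sconc.2 (mem_Ici.mpr hupos.le) (mem_Ici.mpr le_rfl) hupos.ne'
      ht0 (by linarith : (0:ℝ) < 1 - u / ustar) (by ring)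
    have he : u / ustar * ustar = u := div_mul_cancel₀ u hupos.ne'
    simp only [smul_eq_mul, mul_zero, add_zero, h0, hfix] at this
    rw [he] at this
    linarith
  have lemB : ∀ u : ℝ, ustar < u → h u < u := by
    intro u hult
    have hu0 : 0 < u := lt_trans hupos hult
    have ht0 : 0 < ustar / u := div_pos hupos hu0
    have ht1 : ustar / u < 1 := (div_lt_one hu0).mpr hult
    have := sconc.2 (mem_Ici.mpr hu0.le) (mem_Ici.mpr le_rfl) hu0.ne'
      ht0 (by linarith : (0:ℝ) < 1 - ustar / u) (by ring)
    have he : ustar / u * u = ustar := div_mul_cancel₀ ustar hu0.ne'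
    simp only [smul_eq_mul, mul_zero, add_zero, h0] at this
    rw [he, hfix] at this
    -- this : ustar / u * h u < ustar
    have h2 : ustar * h u < ustar * u := by
      rw [div_mul_eq_mul_div] at this
      have := (div_lt_iff₀ hu0).mp this
      nlinarith
    exact lt_of_mul_lt_mul_left h2 hupos.le
  -- uniqueness
  have huniq : ∀ v : ℝ, 0 < v → h v = v → v = ustar := by
    intro v hv hfv
    rcases lt_trichotomy v ustar with hl | he | hg
    · exact absurd hfv (ne_of_gt (lemA v hv hl))
    · exact he
    · exact absurd hfv (ne_of_lt (lemB v hg))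
  refine ⟨ustar, hupos, hfix, huniq, ?_⟩
  -- convergence
  intro u₀ hu₀ u hu0 hrec
  have fixedLimit : ∀ L : ℝ, 0 < L → Tendsto u atTop (nhds L) → Tendsto u atTop (nhds ustar) := by
    intro L hL0 hL
    have hcontL : ContinuousAt h L := hcontAt L (by linarith)
    have h1 : Tendsto (fun n => u (n + 1)) atTop (nhds L) :=
      hL.comp (tendsto_add_atTop_nat 1)
    have h2 : Tendsto (fun n => u (n + 1)) atTop (nhds (h L)) :=
      (hcontL.tendsto.comp hL).congr (fun n => (hrec n).symm)
    have hfixL : h L = L := tendsto_nhds_unique h2 h1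
    rwa [huniq L hL0 hfixL] at hL
  rcases lt_trichotomy u₀ ustar with hlt | heq | hgt
  · -- increasing case
    have inv : ∀ n, 0 < u n ∧ u n ≤ ustar := by
      intro n
      induction n with
      | zero => rw [hu0]; exact ⟨hu₀, hlt.le⟩
      | succ n ih =>
        obtain ⟨hp, hle⟩ := ih
        constructor
        · rcases eq_or_lt_of_le hle with he | hl
          · rw [hrec n, he, hfix]; exact hupos
          · rw [hrec n]; exact lt_trans hp (lemA _ hp hl)
        · rw [hrec n, ← hfix]
          exact mono (mem_Ici.mpr hp.le) (mem_Ici.mpr hupos.le) hle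
    have hmonou : Monotone u := by
      apply monotone_nat_of_le_succ
      intro n
      rcases eq_or_lt_of_le (inv n).2 with he | hl
      · rw [hrec n, he, hfix]
      · rw [hrec n]; exact (lemA _ (inv n).1 hl).le
    rcases tendsto_of_monotone hmonou with hTop | ⟨L, hL⟩
    · exfalso
      obtain ⟨n, hn⟩ := (hTop.eventually (eventually_gt_atTop ustar)).exists
      exact absurd (inv n).2 (not_le.mpr hn)
    · have hLpos : 0 < L := by
        have := hmonou.ge_of_tendsto hL 0
        rw [hu0] at this
        linarith
      exact fixedLimit L hLpos hL
  · -- constant case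
    have hconst : ∀ n, u n = ustar := by
      intro n
      induction n with
      | zero => rw [hu0, heq]
      | succ n ih => rw [hrec n, ih, hfix]
    have : u = fun _ => ustar := funext hconst
    rw [this]
    exact tendsto_const_nhds
  · -- decreasing case
    have inv : ∀ n, ustar ≤ u n := by
      intro n
      induction n with
      | zero => rw [hu0]; exact hgt.le
      | succ n ih =>
        rw [hrec n, ← hfix]
        exact mono (mem_Ici.mpr hupos.le) (mem_Ici.mpr (lt_of_lt_of_le hupos ih).le) ih
    have hanti : Antitone u := by
      apply antitone_nat_of_succ_le
      intro n
      rcases eq_or_lt_of_le (inv n) with he | hl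
      · rw [hrec n, ← he, hfix]
      · rw [hrec n]; exact (lemB _ hl).le
    rcases tendsto_of_antitone hanti with hBot | ⟨L, hL⟩
    · exfalso
      obtain ⟨n, hn⟩ := (hBot.eventually (eventually_lt_atBot ustar)).exists
      exact absurd (inv n) (not_le.mpr hn)
    · have hLge : ustar ≤ L := ge_of_tendsto hL (Eventually.of_forall inv)
      exact fixedLimit L (lt_of_lt_of_le hupos hLge) hL
end
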